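/- arXiv:2406.19319 — 7 statements merged into one kernel-verified Lean document; each statement's English description precedes it below -/
import Mathlib

section
/- In any left Novikov algebra, the element (ab)c + (bc)a + (ca)b is symmetric under all permutations of a, b, c; that is, (ab)c + (bc)a + (ca)b = (ba)c + (cb)a + (ac)b for all a, b, c. -/
/-- In any left Novikov algebra, `(ab)c + (bc)a + (ca)b` is symmetric in `a, b, c`. -/
theorem novikov_cyclic_sum_symmetric {A : Type*} [NonUnitalNonAssocRing A]
    (h1 : ∀ x y z : A, (x * y) * z - x * (y * z) = (x * z) * y - x * (z * y))
    (h2 : ∀ x y z : A, x * (y * z) = y * (x * z)) (a b c : A) :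
    (a * b) * c + (b * c) * a + (c * a) * b
      = (b * a) * c + (c * b) * a + (a * c) * b := by
  linear_combination (norm := abel) h1 a b c + h1 b c a + h1 c a b + h2 a b c + h2 b c a + h2 c a b
end

section
/- In any left Novikov algebra over a field of characteristic zero, with polarized operations x·y = xy + yx and [x,y] = xy - yx, one has [a,b]·c + [b,c]·a + [c,a]·b = 0 for all a, b, c. -/
/-- In any left Novikov algebra over a field of characteristic zero,
`[a,b]·c + [b,c]·a + [c,a]·b = 0` for the polarized operations. -/
theorem novikov_polarized_bracket_dot_sum {k A : Type*} [Field k] [CharZero k]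
    [NonUnitalNonAssocRing A] [Module k A] [SMulCommClass k A A] [IsScalarTower k A A]
    (h1 : ∀ x y z : A, (x * y) * z - x * (y * z) = (x * z) * y - x * (z * y))
    (h2 : ∀ x y z : A, x * (y * z) = y * (x * z)) (a b c : A) :
    (let br : A → A → A := fun x y => x * y - y * x;
     let dt : A → A → A := fun x y => x * y + y * x;
      dt (br a b) c + dt (br b c) a + dt (br c a) b) = 0 := by
  simp only [mul_sub, sub_mul]
  linear_combination (norm := abel) h1 a b c + h1 b c a + h1 c a b +
    h2 c a b + h2 c a b + h2 a b c + h2 a b c + h2 b c a + h2 b c a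
end

section
/- In any left Novikov algebra over a field of characteristic zero, with polarized operations x·y = xy + yx and [x,y] = xy - yx, one has 2[a,b]·c = [a·c, b] + [[a,b],c] + [a, b·c] for all a, b, c. -/
/-- In any left Novikov algebra over a field of characteristic zero,
`2[a,b]·c = [a·c, b] + [[a,b],c] + [a, b·c]`. -/
theorem novikov_polarized_identity_three {k A : Type*} [Field k] [CharZero k]
    [NonUnitalNonAssocRing A] [Module k A] [SMulCommClass k A A] [IsScalarTower k A A]
    (h1 : ∀ x y z : A, (x * y) * z - x * (y * z) = (x * z) * y - x * (z * y))
    (h2 : ∀ x y z : A, x * (y * z) = y * (x * z)) (a b c : A) :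
    (let br : A → A → A := fun x y => x * y - y * x;
     let dt : A → A → A := fun x y => x * y + y * x;
      2 • dt (br a b) c = br (dt a c) b + br (br a b) c + br a (dt b c)) := by
  simp only [mul_add, add_mul, mul_sub, sub_mul, two_smul]
  linear_combination (norm := abel) h1 a b c - h1 b a c - h1 c a b + h2 c a b + h2 c a b - h2 c b a - h2 c b a
end

section
/- In any left Novikov algebra over a field of characteristic zero, with polarized operations x·y = xy + yx and [x,y] = xy - yx, one has (a·b)·c - a·(b·c) = [a,c]·b for all a, b, c. -/
/-- In any left Novikov algebra over a field of characteristic zero,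
`(a·b)·c - a·(b·c) = [a,c]·b`. -/
theorem novikov_polarized_identity_four {k A : Type*} [Field k] [CharZero k]
    [NonUnitalNonAssocRing A] [Module k A] [SMulCommClass k A A] [IsScalarTower k A A]
    (h1 : ∀ x y z : A, (x * y) * z - x * (y * z) = (x * z) * y - x * (z * y))
    (h2 : ∀ x y z : A, x * (y * z) = y * (x * z)) (a b c : A) :
    (let br : A → A → A := fun x y => x * y - y * x;
     let dt : A → A → A := fun x y => x * y + y * x;
      dt (dt a b) c - dt a (dt b c) = dt (br a c) b) := by
  show (a*b + b*a)*c + c*(a*b + b*a) - (a*(b*c + c*b) + (b*c + c*b)*a)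
      = (a*c - c*a)*b + b*(a*c - c*a)
  have H1 := h1 a b c
  have H2 := h1 b a c
  have H3 := h1 c b a
  have E1 := h2 c a b
  have E2 := h2 c b a
  simp only [mul_add, add_mul, mul_sub, sub_mul]
  linear_combination (norm := abel) H1 + H2 - H3 + E1 + E1
end

section
/- Fix δ in a field k of characteristic zero. Let B_δ be the two-dimensional algebra with basis e, f and multiplication ee = 0, ef = -δe, fe = e, ff = f. Then B_δ is a left Novikov algebra. -/
/-- The multiplication of the two-dimensional algebra `B_δ` with basis `e = (1,0)`,
`f = (0,1)` and products `ee = 0`, `ef = -δe`, `fe = e`, `ff = f`, written in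
coordinates. -/
def Bmul {k : Type*} [Field k] (δ : k) (x y : k × k) : k × k :=
  (-δ * x.1 * y.2 + x.2 * y.1, x.2 * y.2)

/-- The algebra `B_δ` is a left Novikov algebra. -/
theorem Bdelta_novikov {k : Type*} [Field k] [CharZero k] (δ : k) :
    (∀ a b c : k × k,
      Bmul δ (Bmul δ a b) c - Bmul δ a (Bmul δ b c)
        = Bmul δ (Bmul δ a c) b - Bmul δ a (Bmul δ c b)) ∧
    (∀ a b c : k × k, Bmul δ a (Bmul δ b c) = Bmul δ b (Bmul δ a c)) := by
  constructor <;> intro a b c <;> simp [Bmul, Prod.ext_iff] <;> constructor <;> ring_nf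
end

section
/- Fix δ in a field k of characteristic zero. In the two-dimensional algebra B_δ with basis e, f and multiplication ee = 0, ef = -δe, fe = e, ff = f, the identity ((a,a,b) - (b,a,a)) + δ(a(ab) - b(aa)) = 0 holds for all a, b in B_δ, where (x,y,z) = (xy)z - x(yz). -/
/-- In `B_δ`, the identity `((a,a,b) - (b,a,a)) + δ(a(ab) - b(aa)) = 0` holds. -/
theorem Bdelta_satisfies_identity {k : Type*} [Field k] [CharZero k] (δ : k)
    (a b : k × k) :
    (let mul := Bmul δ
     let assoc : k × k → k × k → k × k → k × k :=
       fun x y z => mul (mul x y) z - mul x (mul y z);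
      (assoc a a b - assoc b a a)
        + δ • (mul a (mul a b) - mul b (mul a a))) = 0 := by
  simp only [Bmul, Prod.smul_mk, Prod.mk_sub_mk, Prod.mk_add_mk, smul_eq_mul]
  ext <;> simp [Bmul] <;> ring
end

section
/- Let A be a commutative associative differential algebra over a field of characteristic zero with derivation ', and suppose that a''b'cd = 0 holds for all a, b, c, d ∈ A. Then for every n ≥ 4 and every tuple of nonnegative integers k₁ ≥ k₂ ≥ … ≥ kₙ with k₁ + … + kₙ = n - 1, k₁ ≥ 2, and k₂ ≥ 1, the product a₁^{(k₁)} a₂^{(k₂)} ⋯ aₙ^{(kₙ)} vanishes for all a₁, …, aₙ ∈ A. -/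
set_option maxHeartbeats 1000000


/-- If `a''b'cd = 0` holds in a commutative associative differential algebra, then
every differential monomial `a₁^{(k₁)} ⋯ aₙ^{(kₙ)}` with `n ≥ 4`,
`k₁ ≥ … ≥ kₙ ≥ 0`, `k₁ + ⋯ + kₙ = n - 1`, `k₁ ≥ 2`, `k₂ ≥ 1` vanishes. -/
theorem diff_alg_monomials_vanish {K A : Type*} [Field K] [CharZero K] [CommRing A]
    [Algebra K A] (D : Derivation K A A)
    (h : ∀ a b c d : A, D (D a) * D b * c * d = 0)
    (n : ℕ) (hn : 4 ≤ n) (k : Fin n → ℕ)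
    (hmono : ∀ i j : Fin n, i ≤ j → k j ≤ k i)
    (hsum : ∑ i, k i = n - 1)
    (h1 : 2 ≤ k ⟨0, by omega⟩) (h2 : 1 ≤ k ⟨1, by omega⟩)
    (a : Fin n → A) :
    ∏ i, (⇑D)^[k i] (a i) = 0 := by
  set i0 : Fin n := ⟨0, by omega⟩ with hi0
  set i1 : Fin n := ⟨1, by omega⟩ with hi1
  have hne : i1 ≠ i0 := by simp [hi0, hi1, Fin.ext_iff]
  rw [← Finset.mul_prod_erase Finset.univ _ (Finset.mem_univ i0),
      ← Finset.mul_prod_erase _ _ (Finset.mem_erase.mpr ⟨hne, Finset.mem_univ i1⟩)]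
  obtain ⟨m0, hm0⟩ : ∃ m, k i0 = m + 2 := ⟨k i0 - 2, by omega⟩
  obtain ⟨m1, hm1⟩ : ∃ m, k i1 = m + 1 := ⟨k i1 - 1, by omega⟩
  rw [hm0, hm1, Function.iterate_succ_apply', Function.iterate_succ_apply',
      Function.iterate_succ_apply']
  have key := h ((⇑D)^[m0] (a i0)) ((⇑D)^[m1] (a i1))
    (∏ i ∈ (Finset.univ.erase i0).erase i1, (⇑D)^[k i] (a i)) 1
  linear_combination key
end
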